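/- Let p = p(θ₀) for some θ₀ ∈ Θ, let C ⊆ Θ be compact with inf_{θ ∈ Θ∖C} ρ(p,θ) > ρ(p,θ*) for some θ* ∈ C, and suppose θ₀ is the unique global minimizer of ρ(p,·) over Θ. Assume G and G′ are bounded on [−1,∞) and θ ↦ p_k(θ) is continuous on C for each k. If (q_n) ⊆ Γ satisfies q_{n,k} → p_k(θ₀) as n → ∞ for every k, then for all sufficiently large n the map θ ↦ ρ(q_n,θ) attains a global minimum over Θ, and any sequence of such global minimizers converges to θ₀. (This is the pathwise statement underlying the strong consistency of the minimum disparity estimator based on a strongly consistent nonparametric estimator of the offspring law.) -/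

import Mathlib

open Filter Topology

/-- `q` is a probability distribution on the nonnegative integers. -/
def IsDistrib (q : ℕ → ℝ) : Prop := (∀ k, 0 ≤ q k) ∧ HasSum q 1

/-- The disparity measure `ρ(q,θ) = Σ_k G(q_k/p_k(θ) - 1) · p_k(θ)`. -/
noncomputable def disparity (G : ℝ → ℝ) (p : ℝ → ℕ → ℝ) (q : ℕ → ℝ) (θ : ℝ) : ℝ :=
  ∑' k, G (q k / p θ k - 1) * p θ k

/-!
A bounded derivative makes `G` Lipschitz on `[-1, ∞)`, say with constant `K`, so
`|ρ(q,θ) - ρ(q',θ)| ≤ K ‖q - q'‖₁` uniformly in `θ`; by Scheffé's lemma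
`‖q_n - p(θ₀)‖₁ → 0`, hence `ρ(q_n,·) → ρ(p(θ₀),·)` uniformly on `Θ`. Writing
`ρ(q,θ) = G(-1) + Σ_k (G(δ_k) - G(-1)) p_k(θ)`, whose terms are bounded by `K q_k`
independently of `θ`, shows that `ρ(q,·)` is continuous on `C`. Uniform convergence then
confines the minimizers of `ρ(q_n,·)` to the compact `C`, where they exist, and, since
`ρ(p(θ₀),·)` is bounded away from its minimum outside any neighbourhood of `θ₀`, eventually
to that neighbourhood.
-/

open Set NNReal

theorem Set.OrdConnected.lipschitzOnWith_of_abs_deriv_le {f : ℝ → ℝ} {s : Set ℝ} {K : ℝ}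
    (hs : s.OrdConnected) (hf : ContinuousOn f s) (hf' : DifferentiableOn ℝ f (interior s))
    (hK : ∀ t ∈ interior s, |deriv f t| ≤ K) : LipschitzOnWith K.toNNReal f s := by
  have hlt : ∀ x ∈ s, ∀ y ∈ s, x < y → |f y - f x| ≤ K * (y - x) := by
    intro x hx y hy hxy
    have hIcc := hs.out hx hy
    have hIoo : Ioo x y ⊆ interior s := by
      simpa only [interior_Icc] using interior_mono hIcc
    obtain ⟨c, hc, hslope⟩ := exists_deriv_eq_slope f hxy (hf.mono hIcc) (hf'.mono hIoo)
    have hc' := hK c (hIoo hc)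
    rwa [hslope, abs_div, abs_of_pos (sub_pos.2 hxy), div_le_iff₀ (sub_pos.2 hxy)] at hc'
  refine LipschitzOnWith.of_le_add_mul' K fun x hx y hy => ?_
  rw [Real.dist_eq, ← sub_le_iff_le_add']
  refine (le_abs_self _).trans ?_
  rcases lt_trichotomy x y with h | rfl | h
  · rw [abs_sub_comm, abs_sub_comm x, abs_of_pos (sub_pos.2 h)]; exact hlt x hx y hy h
  · simp
  · rw [abs_of_pos (sub_pos.2 h)]; exact hlt y hy x hx h

theorem div_sub_one_mem_Ici {a b : ℝ} (ha : 0 ≤ a) (hb : 0 ≤ b) : a / b - 1 ∈ Ici (-1 : ℝ) := by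
  simpa using div_nonneg ha hb

section Disparity

variable {G : ℝ → ℝ} {K : ℝ≥0}

theorem abs_sub_mul_le_of_lipschitzOnWith (hG : LipschitzOnWith K G (Ici (-1)))
    {a a' b : ℝ} (ha : 0 ≤ a) (ha' : 0 ≤ a') (hb : 0 < b) :
    |(G (a / b - 1) - G (a' / b - 1)) * b| ≤ K * |a - a'| := by
  have h := hG.dist_le_mul _ (div_sub_one_mem_Ici ha hb.le) _ (div_sub_one_mem_Ici ha' hb.le)
  rw [Real.dist_eq, Real.dist_eq, show a / b - 1 - (a' / b - 1) = (a - a') / b by ring,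
    abs_div, abs_of_pos hb] at h
  rw [abs_mul, abs_of_pos hb]
  calc |G (a / b - 1) - G (a' / b - 1)| * b ≤ K * (|a - a'| / b) * b := by gcongr
    _ = K * |a - a'| := by field_simp

theorem abs_sub_apply_neg_one_mul_le (hG : LipschitzOnWith K G (Ici (-1)))
    {a b : ℝ} (ha : 0 ≤ a) (hb : 0 < b) : |(G (a / b - 1) - G (-1)) * b| ≤ K * a := by
  simpa [abs_of_nonneg ha] using abs_sub_mul_le_of_lipschitzOnWith hG ha le_rfl hb

variable {p : ℝ → ℕ → ℝ} {θ : ℝ} {q q' : ℕ → ℝ}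

theorem hasSum_disparity (hG : LipschitzOnWith K G (Ici (-1))) (hp : IsDistrib (p θ))
    (hpos : ∀ k, 0 < p θ k) (hq : IsDistrib q) :
    HasSum (fun k => G (q k / p θ k - 1) * p θ k)
      (∑' k, (G (q k / p θ k - 1) - G (-1)) * p θ k + G (-1)) := by
  have hshift : Summable fun k => (G (q k / p θ k - 1) - G (-1)) * p θ k :=
    .of_norm_bounded (hq.2.summable.mul_left (K : ℝ)) fun k =>
      abs_sub_apply_neg_one_mul_le hG (hq.1 k) (hpos k)
  have hconst : HasSum (fun k => G (-1) * p θ k) (G (-1)) := by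
    simpa using hp.2.mul_left (G (-1))
  convert hshift.hasSum.add hconst using 1
  funext k
  ring

theorem abs_disparity_sub_le (hG : LipschitzOnWith K G (Ici (-1))) (hp : IsDistrib (p θ))
    (hpos : ∀ k, 0 < p θ k) (hq : IsDistrib q) (hq' : IsDistrib q') :
    |disparity G p q θ - disparity G p q' θ| ≤ K * ∑' k, |q k - q' k| := by
  have hs : Summable fun k => |q k - q' k| := (hq.2.summable.sub hq'.2.summable).abs
  unfold disparity
  rw [← (hasSum_disparity hG hp hpos hq).summable.tsum_sub
    (hasSum_disparity hG hp hpos hq').summable]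
  refine tsum_of_norm_bounded
    (f := fun k => G (q k / p θ k - 1) * p θ k - G (q' k / p θ k - 1) * p θ k)
    (hs.hasSum.mul_left (K : ℝ)) fun k => ?_
  rw [Real.norm_eq_abs, ← sub_mul]
  exact abs_sub_mul_le_of_lipschitzOnWith hG (hq.1 k) (hq'.1 k) (hpos k)

theorem continuousOn_disparity {C : Set ℝ} (hG : LipschitzOnWith K G (Ici (-1)))
    (hp : ∀ θ ∈ C, IsDistrib (p θ)) (hpos : ∀ θ ∈ C, ∀ k, 0 < p θ k)
    (hpc : ∀ k, ContinuousOn (fun θ => p θ k) C) (hq : IsDistrib q) :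
    ContinuousOn (disparity G p q) C := by
  have hterm (k : ℕ) : ContinuousOn (fun θ => (G (q k / p θ k - 1) - G (-1)) * p θ k) C := by
    have hδ : ContinuousOn (fun θ => q k / p θ k - 1) C :=
      (continuousOn_const.div (hpc k) fun θ hθ => (hpos θ hθ k).ne').sub continuousOn_const
    exact ((hG.continuousOn.comp hδ fun θ hθ => div_sub_one_mem_Ici (hq.1 k) (hpos θ hθ k).le).sub
      continuousOn_const).mul (hpc k)
  have hshift := continuousOn_tsum hterm (hq.2.summable.mul_left (K : ℝ)) fun k θ hθ =>
    abs_sub_apply_neg_one_mul_le hG (hq.1 k) (hpos θ hθ k)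
  exact (hshift.add (continuousOn_const (c := G (-1)))).congr fun θ hθ =>
    (hasSum_disparity hG (hp θ hθ) (hpos θ hθ) hq).tsum_eq

theorem IsDistrib.tsum_abs_sub_eq {q r : ℕ → ℝ} (hq : IsDistrib q) (hr : IsDistrib r) :
    ∑' k, |q k - r k| = 2 * ∑' k, max (r k - q k) 0 := by
  have hmax : Summable fun k => max (r k - q k) 0 :=
    .of_nonneg_of_le (fun k => le_max_right _ _)
      (fun k => max_le (by linarith [hq.1 k]) (hr.1 k)) hr.2.summable
  have hsub : HasSum (fun k => q k - r k) 0 := by simpa using hq.2.sub hr.2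
  refine HasSum.tsum_eq ?_
  convert hsub.add (hmax.hasSum.mul_left 2) using 1
  · funext k
    rcases le_total (q k) (r k) with h | h
    · rw [abs_of_nonpos (by linarith), max_eq_left (by linarith)]; ring
    · rw [abs_of_nonneg (by linarith), max_eq_right (by linarith)]; ring
  · ring

theorem tendsto_tsum_abs_sub_of_tendsto {ι : Type*} {l : Filter ι} {q : ι → ℕ → ℝ}
    {r : ℕ → ℝ} (hq : ∀ i, IsDistrib (q i)) (hr : IsDistrib r)
    (h : ∀ k, Tendsto (fun i => q i k) l (𝓝 (r k))) :
    Tendsto (fun i => ∑' k, |q i k - r k|) l (𝓝 0) := by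
  simp only [fun i => (hq i).tsum_abs_sub_eq hr]
  have hdefect := tendsto_tsum_of_dominated_convergence (𝓕 := l)
    (f := fun i k => max (r k - q i k) 0) (g := fun _ => 0) hr.2.summable
    (fun k => by
      simpa using ((tendsto_const_nhds (x := r k)).sub (h k)).max
        (tendsto_const_nhds (x := (0 : ℝ))))
    (.of_forall fun i k => by
      rw [Real.norm_eq_abs, abs_of_nonneg (le_max_right _ _)]
      exact max_le (by linarith [(hq i).1 k]) (hr.1 k))
  simpa using hdefect.const_mul 2

theorem tendstoUniformlyOn_disparity {Θ : Set ℝ} {ι : Type*} {l : Filter ι}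
    {q : ι → ℕ → ℝ} {r : ℕ → ℝ}
    (hG : LipschitzOnWith K G (Ici (-1))) (hp : ∀ θ ∈ Θ, IsDistrib (p θ))
    (hpos : ∀ θ ∈ Θ, ∀ k, 0 < p θ k) (hq : ∀ i, IsDistrib (q i)) (hr : IsDistrib r)
    (h : ∀ k, Tendsto (fun i => q i k) l (𝓝 (r k))) :
    TendstoUniformlyOn (fun i => disparity G p (q i)) (disparity G p r) l Θ := by
  have hbound : Tendsto (fun i => K * ∑' k, |q i k - r k|) l (𝓝 0) := by
    simpa using (tendsto_tsum_abs_sub_of_tendsto hq hr h).const_mul (K : ℝ)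
  refine Metric.tendstoUniformlyOn_iff.2 fun ε hε => ?_
  filter_upwards [hbound.eventually (gt_mem_nhds hε)] with i hi θ hθ
  rw [dist_comm, Real.dist_eq]
  exact (abs_disparity_sub_le hG (hp θ hθ) (hpos θ hθ) (hq i) hr).trans_lt hi

end Disparity

section Argmin

variable {X ι : Type*} {l : Filter ι} {F : ι → X → ℝ} {f : X → ℝ} {Θ C : Set X} {c : ℝ}

theorem TendstoUniformlyOn.eventually_lt_of_lt_of_le {T : Set X} {x : X}
    (hF : TendstoUniformlyOn F f l Θ) (hx : x ∈ Θ) (hT : T ⊆ Θ) (hxc : f x < c)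
    (hc : ∀ t ∈ T, c ≤ f t) : ∀ᶠ i in l, ∀ t ∈ T, F i x < F i t := by
  filter_upwards [Metric.tendstoUniformlyOn_iff.1 hF _ (half_pos (sub_pos.2 hxc))]
    with i hi t ht
  have hix := hi x hx
  have hit := hi t (hT ht)
  rw [Real.dist_eq, abs_lt] at hix hit
  linarith [hc t ht]

theorem TendstoUniformlyOn.eventually_exists_isMinOn [TopologicalSpace X] {x : X}
    (hF : TendstoUniformlyOn F f l Θ) (hC : IsCompact C) (hCΘ : C ⊆ Θ)
    (hFC : ∀ i, ContinuousOn (F i) C) (hx : x ∈ C) (hxc : f x < c)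
    (hc : ∀ t ∈ Θ \ C, c ≤ f t) : ∀ᶠ i in l, ∃ y ∈ Θ, IsMinOn (F i) Θ y := by
  filter_upwards [hF.eventually_lt_of_lt_of_le (hCΘ hx) sdiff_subset hxc hc] with i hi
  obtain ⟨y, hyC, hy⟩ := hC.exists_isMinOn ⟨x, hx⟩ (hFC i)
  refine ⟨y, hCΘ hyC, isMinOn_iff.2 fun t ht => ?_⟩
  by_cases htC : t ∈ C
  · exact isMinOn_iff.1 hy t htC
  · exact (isMinOn_iff.1 hy x hx).trans (hi t ⟨ht, htC⟩).le

theorem TendstoUniformlyOn.tendsto_of_isMinOn [TopologicalSpace X] {x₀ : X} {x : ι → X}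
    (hF : TendstoUniformlyOn F f l Θ) (hC : IsCompact C) (hCΘ : C ⊆ Θ) (hf : ContinuousOn f C)
    (hx₀ : x₀ ∈ Θ) (hmin : ∀ t ∈ Θ, t ≠ x₀ → f x₀ < f t) (hx₀c : f x₀ < c)
    (hc : ∀ t ∈ Θ \ C, c ≤ f t) (hx : ∀ᶠ i in l, x i ∈ Θ ∧ IsMinOn (F i) Θ (x i)) :
    Tendsto x l (𝓝 x₀) := by
  refine tendsto_nhds.2 fun U hU hx₀U => ?_
  obtain ⟨c', hc', hc'U⟩ := (hC.diff hU).exists_forall_le' (hf.mono sdiff_subset)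
    fun t ht => hmin t (hCΘ ht.1) fun h => ht.2 (h ▸ hx₀U)
  have hlow : ∀ t ∈ Θ \ U, min c c' ≤ f t := by
    rintro t ⟨htΘ, htU⟩
    by_cases htC : t ∈ C
    · exact min_le_of_right_le (hc'U t ⟨htC, htU⟩)
    · exact min_le_of_left_le (hc t ⟨htΘ, htC⟩)
  filter_upwards [hF.eventually_lt_of_lt_of_le hx₀ sdiff_subset (lt_min hx₀c hc') hlow, hx]
    with i hi ⟨hxΘ, hxmin⟩
  by_contra hxU
  exact (hi (x i) ⟨hxΘ, hxU⟩).not_ge (isMinOn_iff.1 hxmin x₀ hx₀)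

end Argmin

theorem stmt_5_general
    (Θ : Set ℝ) (p : ℝ → ℕ → ℝ) (G : ℝ → ℝ) (C : Set ℝ) (θs θ₀ : ℝ)
    (qn : ℕ → ℕ → ℝ)
    (hp : ∀ θ ∈ Θ, IsDistrib (p θ)) (hppos : ∀ θ ∈ Θ, ∀ k, 0 < p θ k)
    (hG3 : ContDiffOn ℝ 3 G (Set.Ici (-1)))
    (hθ₀ : θ₀ ∈ Θ) (hqn : ∀ n, IsDistrib (qn n))
    (hC : IsCompact C) (hCsub : C ⊆ Θ) (hθs : θs ∈ C)
    (hinf : ∃ c, disparity G p (p θ₀) θs < c ∧ ∀ θ ∈ Θ \ C, c ≤ disparity G p (p θ₀) θ)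
    (hθ₀min : ∀ θ ∈ Θ, disparity G p (p θ₀) θ₀ ≤ disparity G p (p θ₀) θ)
    (hθ₀uniq : ∀ θ₁ ∈ Θ,
      (∀ θ ∈ Θ, disparity G p (p θ₀) θ₁ ≤ disparity G p (p θ₀) θ) → θ₁ = θ₀)
    (hGbdd : ∃ M, ∀ t ∈ Set.Ici (-1:ℝ), |G t| ≤ M ∧ |deriv G t| ≤ M)
    (hpcont : ∀ k, ContinuousOn (fun θ => p θ k) C)
    (hconv : ∀ k, Tendsto (fun n => qn n k) atTop (𝓝 (p θ₀ k))) :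
    (∀ᶠ n in atTop, ∃ θ ∈ Θ, ∀ t ∈ Θ, disparity G p (qn n) θ ≤ disparity G p (qn n) t) ∧
    ∀ θn : ℕ → ℝ,
      (∀ᶠ n in atTop, θn n ∈ Θ ∧
        ∀ t ∈ Θ, disparity G p (qn n) (θn n) ≤ disparity G p (qn n) t) →
      Tendsto θn atTop (𝓝 θ₀) := by
  obtain ⟨M, hM⟩ := hGbdd
  obtain ⟨c, hθsc, hc⟩ := hinf
  have hG : LipschitzOnWith M.toNNReal G (Ici (-1)) :=
    ordConnected_Ici.lipschitzOnWith_of_abs_deriv_le hG3.continuousOn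
      ((hG3.differentiableOn (by norm_num)).mono interior_subset)
      fun t ht => (hM t (interior_subset ht)).2
  have hF := tendstoUniformlyOn_disparity hG hp hppos hqn (hp θ₀ hθ₀) hconv
  have hρ (q : ℕ → ℝ) (hq : IsDistrib q) : ContinuousOn (disparity G p q) C :=
    continuousOn_disparity hG (fun θ hθ => hp θ (hCsub hθ)) (fun θ hθ => hppos θ (hCsub hθ))
      hpcont hq
  refine ⟨by simpa only [isMinOn_iff] using
    hF.eventually_exists_isMinOn hC hCsub (fun n => hρ _ (hqn n)) hθs hθsc hc, fun θn hθn => ?_⟩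
  have hstrict : ∀ θ ∈ Θ, θ ≠ θ₀ → disparity G p (p θ₀) θ₀ < disparity G p (p θ₀) θ :=
    fun θ hθ hne => lt_of_not_ge fun hle =>
      hne (hθ₀uniq θ hθ fun t ht => hle.trans (hθ₀min t ht))
  exact hF.tendsto_of_isMinOn hC hCsub (hρ _ (hp θ₀ hθ₀)) hθ₀ hstrict
    ((hθ₀min θs (hCsub hθs)).trans_lt hθsc) hc (by simpa only [isMinOn_iff] using hθn)

/-- pathwise consistency of the MDE: if `q_{n,k} → p_k(θ₀)` for every `k`,
then the minimizers of `ρ(q_n,·)` eventually exist and converge to `θ₀`, the unique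
global minimizer of `ρ(p(θ₀),·)`. -/
theorem stmt_5
    (Θ : Set ℝ) (p : ℝ → ℕ → ℝ) (G : ℝ → ℝ) (C : Set ℝ) (θs θ₀ : ℝ)
    (qn : ℕ → ℕ → ℝ)
    (hp : ∀ θ ∈ Θ, IsDistrib (p θ)) (hppos : ∀ θ ∈ Θ, ∀ k, 0 < p θ k)
    (hG3 : ContDiffOn ℝ 3 G (Set.Ici (-1)))
    (hGconv : StrictConvexOn ℝ (Set.Ici (-1)) G) (hG0 : G 0 = 0)
    (hθ₀ : θ₀ ∈ Θ) (hqn : ∀ n, IsDistrib (qn n))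
    (hC : IsCompact C) (hCsub : C ⊆ Θ) (hθs : θs ∈ C)
    (hinf : ∃ c, disparity G p (p θ₀) θs < c ∧ ∀ θ ∈ Θ \ C, c ≤ disparity G p (p θ₀) θ)
    (hθ₀min : ∀ θ ∈ Θ, disparity G p (p θ₀) θ₀ ≤ disparity G p (p θ₀) θ)
    (hθ₀uniq : ∀ θ₁ ∈ Θ,
      (∀ θ ∈ Θ, disparity G p (p θ₀) θ₁ ≤ disparity G p (p θ₀) θ) → θ₁ = θ₀)
    (hGbdd : ∃ M, ∀ t ∈ Set.Ici (-1:ℝ), |G t| ≤ M ∧ |deriv G t| ≤ M)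
    (hpcont : ∀ k, ContinuousOn (fun θ => p θ k) C)
    (hconv : ∀ k, Tendsto (fun n => qn n k) atTop (𝓝 (p θ₀ k))) :
    (∀ᶠ n in atTop, ∃ θ ∈ Θ, ∀ t ∈ Θ, disparity G p (qn n) θ ≤ disparity G p (qn n) t) ∧
    ∀ θn : ℕ → ℝ,
      (∀ᶠ n in atTop, θn n ∈ Θ ∧
        ∀ t ∈ Θ, disparity G p (qn n) (θn n) ≤ disparity G p (qn n) t) →
      Tendsto θn atTop (𝓝 θ₀) :=
  stmt_5_general Θ p G C θs θ₀ qn hp hppos hG3 hθ₀ hqn hC hCsub hθs hinf hθ₀min hθ₀uniq hGbdd hpcont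
    hconv
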